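/- arXiv:2603.14376 — 6 statements merged into one kernel-verified Lean document; each statement's English description precedes it below -/
import Mathlib

section
/- For 0 ≤ k < N and integers k < j_k ≤ j_{k-1} ≤ ... ≤ j_1 ≤ N, the permutation τ_{(j_k,...,j_1)} := (k, k+1, ..., j_k) ⋯ (2, 3, ..., j_2)(1, 2, ..., j_1) ∈ S_N (product of cycles) belongs to Ξ_N, and every element of Ξ_N is of this form for a unique choice of k and (j_k, ..., j_1). -/
/-!
Work 0-based. A permutation `τ` of `[0, N)` lies in `Ξ_N` exactly when every value `τ m`,
`m ≥ 1`, extends the interval `τ [0, m-1]` by one step to the left or to the right. If `P` is the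
set of left steps, then `τ 0 = #P`, the image of `[0, m]` is `[r, r + m]` with
`r = #{p ∈ P | m < p}`, and `τ m` is the left end of that interval for `m ∈ P` and its right
end otherwise: `τ = xiVal P`.

The product of the cycles `(s, …, e_s)` has the same closed form with `P = {e_s - s}`: multiplying
by the cycle that starts at `s` inserts the new smallest left step `e_s - s` (`xiVal_insert`).
Admissible endpoint data are exactly the encodings of sets `P ⊆ [1, N)`, and `P` is recovered from
the permutation as `{m | τ m < τ 0}`, which gives existence and uniqueness.
-/

/-- Ξ_N : permutations of `Fin N` mapping every initial segment (with ≥ 2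
elements) to an interval. -/
def XiSet (N : ℕ) : Set (Equiv.Perm (Fin N)) :=
  {τ | ∀ k : Fin N, 0 < k.val →
    ∃ a b : Fin N, (Finset.Iic k).image τ = Finset.Icc a b}

open Fin.NatCast in
/-- The cycle `(a, a+1, ..., b)` of `Fin N` (0-based), sending
`a ↦ a+1 ↦ ... ↦ b ↦ a`, written as the product of simple transpositions
`(a,a+1)(a+1,a+2)⋯(b-1,b)`. -/
def cyc (N : ℕ) [NeZero N] (a b : ℕ) : Equiv.Perm (Fin N) :=
  ((List.range (b - a)).map
    (fun i => Equiv.swap ((a + i : ℕ) : Fin N) ((a + i + 1 : ℕ) : Fin N))).prod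

/-- Given a list `L = [e_{k-1}, e_{k-2}, ..., e_0]` of 0-based endpoints
(`e_s` the endpoint of the cycle starting at `s`, listed with decreasing
starting point), the permutation
`τ_{(j_k,...,j_1)} = (k,k+1,...,j_k) ⋯ (2,3,...,j_2)(1,2,...,j_1)`
in 0-based form: the product of the cycles `(s, s+1, ..., e_s)` for
`s = k-1` down to `s = 0`. -/
def tauOfList (N : ℕ) [NeZero N] (L : List ℕ) : Equiv.Perm (Fin N) :=
  (L.zipIdx.map (fun p => cyc N (L.length - 1 - p.2) p.1)).prod

/-- The admissibility conditions on the data `(k; j_k ≤ j_{k-1} ≤ ... ≤ j_1)`: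
in 0-based terms `L` has length `k < N`, is nondecreasing (`j_k ≤ ... ≤ j_1`),
its entries are `< N` (`j_i ≤ N`), and the first endpoint exceeds its starting
point (`k < j_k`). -/
def GoodList (N : ℕ) (L : List ℕ) : Prop :=
  L.length < N ∧ L.Pairwise (· ≤ ·) ∧ (∀ x ∈ L, x < N) ∧
    ∀ h : L ≠ [], L.length - 1 < L.head h

open Finset Equiv

def cycVal (a b x : ℕ) : ℕ := if x = b then a else if a ≤ x ∧ x < b then x + 1 else x

open Fin.NatCast in
lemma cyc_add_one (N : ℕ) [NeZero N] (a d : ℕ) :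
    cyc N a (a + d + 1) =
      cyc N a (a + d) * swap ((a + d : ℕ) : Fin N) ((a + d + 1 : ℕ) : Fin N) := by
  rw [cyc, cyc, show a + d + 1 - a = d + 1 by omega, show a + d - a = d by omega,
    List.range_succ, List.map_append, List.prod_append, List.map_singleton, List.prod_singleton]

open Fin.NatCast in
lemma val_cyc_apply {N : ℕ} [NeZero N] {a b : ℕ} (hab : a ≤ b) (hb : b < N) (x : Fin N) :
    (cyc N a b x : ℕ) = cycVal a b x := by
  obtain ⟨d, rfl⟩ := Nat.exists_eq_add_of_le hab
  clear hab
  induction d generalizing x with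
  | zero =>
    simp only [cyc, Nat.add_zero, Nat.sub_self, List.range_zero, List.map_nil, List.prod_nil,
      Perm.one_apply, cycVal]
    split_ifs <;> omega
  | succ d ih =>
    rw [← add_assoc] at hb ⊢
    have hcast (n : ℕ) (hn : n < N) : ((n : ℕ) : Fin N) = ⟨n, hn⟩ :=
      Fin.ext (Nat.mod_eq_of_lt hn)
    rw [cyc_add_one, hcast _ (by omega), hcast _ hb, Perm.mul_apply, ih _ (by omega)]
    rcases eq_or_ne (x : ℕ) (a + d) with hx | hx
    · rw [show x = ⟨a + d, by omega⟩ from Fin.ext hx, swap_apply_left]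
      simp only [cycVal]; split_ifs <;> omega
    rcases eq_or_ne (x : ℕ) (a + d + 1) with hx' | hx'
    · rw [show x = ⟨a + d + 1, hb⟩ from Fin.ext hx', swap_apply_right]
      simp only [cycVal]; split_ifs <;> omega
    · rw [swap_apply_of_ne_of_ne (fun h => hx (by simp [h])) (fun h => hx' (by simp [h]))]
      simp only [cycVal]; split_ifs <;> omega

lemma tauOfList_cons (N : ℕ) [NeZero N] (e : ℕ) (M : List ℕ) :
    tauOfList N (e :: M) = cyc N M.length e * tauOfList N M := by
  simp only [tauOfList, List.zipIdx_cons', List.map_cons, List.map_map, List.prod_cons,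
    List.length_cons, Nat.add_sub_cancel, Nat.sub_zero]
  congr 2
  refine List.map_congr_left fun p _ => ?_
  simp only [Function.comp_apply, Prod.map_fst, Prod.map_snd, id_eq]
  congr 1
  omega

-- The entry `e_s = p + s` of the cycle starting at `s` records the position `p` that `τ` sends
-- to `s`.
def ofPositions : List ℕ → List ℕ
  | [] => []
  | p :: S => (p + S.length) :: ofPositions S

@[simp] lemma length_ofPositions (S : List ℕ) : (ofPositions S).length = S.length := by
  induction S with
  | nil => rfl
  | cons p S ih => simp [ofPositions, ih]

def Admissible (N : ℕ) (S : List ℕ) : Prop :=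
  S.Pairwise (· < ·) ∧ ∀ p ∈ S, 0 < p ∧ p < N

lemma add_length_lt {N p : ℕ} {S : List ℕ} (hS : (p :: S).Pairwise (· < ·))
    (hN : ∀ q ∈ p :: S, q < N) : p + S.length < N := by
  induction S generalizing p with
  | nil => simpa using hN p (by simp)
  | cons q S ih =>
    have hpq : p < q := List.rel_of_pairwise_cons hS (by simp)
    have := ih hS.of_cons (fun r hr => hN r (List.mem_cons_of_mem p hr))
    simp only [List.length_cons]
    omega

lemma add_length_le_of_mem_ofPositions {p : ℕ} {S : List ℕ} (hS : S.Pairwise (· < ·))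
    (hp : ∀ q ∈ S, p < q) : ∀ y ∈ ofPositions S, p + S.length ≤ y := by
  induction S generalizing p with
  | nil => simp [ofPositions]
  | cons q S ih =>
    have hpq := hp q (by simp)
    intro y hy
    simp only [ofPositions, List.mem_cons] at hy
    rcases hy with rfl | hy
    · simp only [List.length_cons]; omega
    · have := ih hS.of_cons (fun r hr => List.rel_of_pairwise_cons hS hr) y hy
      simp only [List.length_cons]; omega

lemma sub_length_lt_of_le_ofPositions {e : ℕ} {S : List ℕ} (he : S.length < e)
    (hle : ∀ y ∈ ofPositions S, e ≤ y) : ∀ q ∈ S, e - S.length < q := by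
  induction S with
  | nil => simp
  | cons q S ih =>
    rw [List.length_cons] at he
    have hq := hle _ List.mem_cons_self
    have ih' := ih (by omega) (fun y hy => hle y (List.mem_cons_of_mem _ hy))
    simp only [List.length_cons, List.mem_cons, forall_eq_or_imp] at hq ⊢
    refine ⟨by omega, fun r hr => ?_⟩
    have := ih' r hr
    omega

lemma pairwise_le_ofPositions {S : List ℕ} (hS : S.Pairwise (· < ·)) :
    (ofPositions S).Pairwise (· ≤ ·) := by
  induction S with
  | nil => exact List.Pairwise.nil
  | cons p S ih =>
    exact List.pairwise_cons.2 ⟨add_length_le_of_mem_ofPositions hS.of_cons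
      (fun q hq => List.rel_of_pairwise_cons hS hq), ih hS.of_cons⟩

lemma lt_of_mem_ofPositions {N : ℕ} {S : List ℕ} (hS : S.Pairwise (· < ·))
    (hN : ∀ p ∈ S, p < N) : ∀ y ∈ ofPositions S, y < N := by
  induction S with
  | nil => simp [ofPositions]
  | cons p S ih =>
    intro y hy
    simp only [ofPositions, List.mem_cons] at hy
    rcases hy with rfl | hy
    · exact add_length_lt hS hN
    · exact ih hS.of_cons (fun q hq => hN q (List.mem_cons_of_mem p hq)) y hy

lemma goodList_of_cons {N e : ℕ} {M : List ℕ} (h : GoodList N (e :: M)) : GoodList N M := by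
  obtain ⟨hlen, hsort, hN, hhead⟩ := h
  refine ⟨by simp at hlen; omega, hsort.of_cons, fun x hx => hN x (List.mem_cons_of_mem e hx),
    fun hM => ?_⟩
  have := List.rel_of_pairwise_cons hsort (List.head_mem hM)
  have := hhead (List.cons_ne_nil e M)
  simp only [List.length_cons, List.head_cons] at this
  omega

lemma exists_admissible_of_goodList {N : ℕ} {L : List ℕ} (hL : GoodList N L) :
    ∃ S, Admissible N S ∧ ofPositions S = L := by
  induction L with
  | nil => exact ⟨[], ⟨List.Pairwise.nil, by simp⟩, rfl⟩
  | cons e M ih =>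
    obtain ⟨S, ⟨hS, hSN⟩, rfl⟩ := ih (goodList_of_cons hL)
    obtain ⟨-, hsort, hN, hhead⟩ := hL
    have he : S.length < e := by simpa using hhead (List.cons_ne_nil _ _)
    have heN : e < N := hN e List.mem_cons_self
    refine ⟨(e - S.length) :: S, ⟨List.pairwise_cons.2 ⟨sub_length_lt_of_le_ofPositions he
      (fun y hy => List.rel_of_pairwise_cons hsort hy), hS⟩, ?_⟩, ?_⟩
    · simp only [List.mem_cons, forall_eq_or_imp]
      exact ⟨⟨by omega, by omega⟩, hSN⟩
    · simp only [ofPositions]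
      congr 1
      omega

lemma goodList_ofPositions {N : ℕ} [NeZero N] {S : List ℕ} (hS : Admissible N S) :
    GoodList N (ofPositions S) := by
  obtain ⟨hS, hSN⟩ := hS
  refine ⟨?_, pairwise_le_ofPositions hS,
    lt_of_mem_ofPositions hS (fun p hp => (hSN p hp).2), fun hne => ?_⟩
  · cases S with
    | nil => exact Nat.pos_of_neZero N
    | cons p S =>
      have := add_length_lt hS (fun q hq => (hSN q hq).2)
      have := (hSN p List.mem_cons_self).1
      rw [length_ofPositions, List.length_cons]
      omega
  · cases S with
    | nil => exact absurd rfl hne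
    | cons p S =>
      have := (hSN p List.mem_cons_self).1
      simp only [ofPositions, List.head_cons, List.length_cons, length_ofPositions]
      omega

def countAbove (P : Finset ℕ) (m : ℕ) : ℕ := #{p ∈ P | m < p}

def xiVal (P : Finset ℕ) (m : ℕ) : ℕ := (if m ∈ P then 0 else m) + countAbove P m

section countAbove

variable {P : Finset ℕ} {m x : ℕ}

lemma countAbove_le_card : countAbove P m ≤ #P := card_filter_le _ _

lemma countAbove_lt_card (hm : m ∈ P) : countAbove P m < #P :=
  card_lt_card (filter_ssubset.2 ⟨m, hm, lt_irrefl m⟩)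

lemma countAbove_eq_card (h : ∀ p ∈ P, m < p) : countAbove P m = #P :=
  congrArg card (filter_true_of_mem h)

lemma countAbove_le_of_le (hxm : x ≤ m) : countAbove P m ≤ countAbove P x :=
  card_le_card (monotone_filter_right _ fun _ _ h => lt_of_le_of_lt hxm h)

lemma countAbove_le_add : countAbove P x ≤ countAbove P m + (m - x) := by
  have : {p ∈ P | x < p} ⊆ {p ∈ P | m < p} ∪ Ioc x m := fun p hp => by
    simp only [mem_filter, mem_union, mem_Ioc] at hp ⊢
    by_cases h : m < p
    exacts [.inl ⟨hp.1, h⟩, .inr ⟨hp.2, by omega⟩]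
  calc countAbove P x ≤ #({p ∈ P | m < p} ∪ Ioc x m) := card_le_card this
    _ ≤ countAbove P m + (m - x) := (card_union_le _ _).trans (by simp [countAbove])

lemma countAbove_lt_add (hxm : x < m) (hm : m ∉ P) :
    countAbove P x < countAbove P m + (m - x) := by
  have : {p ∈ P | x < p} ⊆ {p ∈ P | m < p} ∪ Ioo x m := fun p hp => by
    simp only [mem_filter, mem_union, mem_Ioo] at hp ⊢
    have : p ≠ m := fun h => hm (h ▸ hp.1)
    by_cases h : m < p
    exacts [.inl ⟨hp.1, h⟩, .inr ⟨hp.2, by omega⟩]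
  calc countAbove P x ≤ #({p ∈ P | m < p} ∪ Ioo x m) := card_le_card this
    _ < countAbove P m + (m - x) := (card_union_le _ _).trans_lt (by simp [countAbove]; omega)

lemma countAbove_add_lt {N : ℕ} (hP : ∀ p ∈ P, p < N) (hm : m < N) :
    countAbove P m + m < N := by
  have : {p ∈ P | m < p} ⊆ Ioo m N := fun p hp => by
    simp only [mem_filter, mem_Ioo] at hp ⊢
    exact ⟨hp.2, hP p hp.1⟩
  have := card_le_card this
  simp only [Nat.card_Ioo] at this
  unfold countAbove
  omega

lemma countAbove_eq_countAbove_add_one_add :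
    countAbove P m = countAbove P (m + 1) + if m + 1 ∈ P then 1 else 0 := by
  have : {p ∈ P | m < p} = {p ∈ P | m + 1 < p ∨ p = m + 1} := filter_congr fun p _ => by omega
  rw [countAbove, countAbove, this, filter_or,
    card_union_of_disjoint (disjoint_filter.2 fun p _ h => by omega), filter_eq']
  split_ifs <;> simp

lemma countAbove_insert {p : ℕ} (hp : p ∉ P) :
    countAbove (insert p P) m = countAbove P m + if m < p then 1 else 0 := by
  unfold countAbove
  rw [filter_insert]
  split_ifs
  · exact card_insert_of_notMem (fun h => hp (mem_filter.1 h).1)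
  · rfl

end countAbove

section xiVal

variable {P : Finset ℕ} {m : ℕ}

lemma xiVal_insert {p : ℕ} (hp : ∀ q ∈ P, p < q) (m : ℕ) :
    xiVal (insert p P) m = cycVal #P (p + #P) (xiVal P m) := by
  have hpP : p ∉ P := fun h => lt_irrefl p (hp p h)
  simp only [xiVal, cycVal, mem_insert, countAbove_insert hpP]
  by_cases hm : m ∈ P
  · have := countAbove_lt_card hm
    have := hp m hm
    simp only [hm, if_true, or_true]
    split_ifs <;> omega
  have hle {x : ℕ} (h : x ≤ p) : countAbove P x = #P :=
    countAbove_eq_card fun q hq => lt_of_le_of_lt h (hp q hq)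
  rcases lt_trichotomy m p with hlt | rfl | hgt
  · have := hle hlt.le
    simp only [hm, hlt.ne, if_false, false_or, if_true, hlt]
    split_ifs <;> omega
  · have := hle (le_refl m)
    simp only [hm, if_false, or_false, if_true, lt_irrefl]
    split_ifs <;> omega
  · have := countAbove_lt_add hgt hm
    have := hle (le_refl p)
    simp only [hm, hgt.ne', if_false, or_false, not_lt.2 hgt.le]
    split_ifs <;> omega

lemma xiVal_mem_Icc {x : ℕ} (hxm : x ≤ m) :
    xiVal P x ∈ Icc (countAbove P m) (countAbove P m + m) := by
  have := countAbove_le_of_le (P := P) hxm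
  have := countAbove_le_add (P := P) (x := x) (m := m)
  rw [mem_Icc, xiVal]
  split_ifs <;> omega

lemma xiVal_zero (h0 : ∀ p ∈ P, 0 < p) : xiVal P 0 = #P := by
  rw [xiVal, if_neg fun h => lt_irrefl 0 (h0 0 h), countAbove_eq_card h0, zero_add]

lemma xiVal_lt_card_iff (h0 : ∀ p ∈ P, 0 < p) : xiVal P m < #P ↔ m ∈ P := by
  have := countAbove_le_add (P := P) (x := 0) (m := m)
  rw [countAbove_eq_card h0] at this
  by_cases hm : m ∈ P
  · simpa [xiVal, hm] using countAbove_lt_card hm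
  · simp only [xiVal, hm, if_false, iff_false, not_lt]
    omega

end xiVal

theorem val_tauOfList_ofPositions {N : ℕ} [NeZero N] {S : List ℕ} (hS : S.Pairwise (· < ·))
    (hN : ∀ p ∈ S, p < N) (x : Fin N) :
    (tauOfList N (ofPositions S) x : ℕ) = xiVal S.toFinset x := by
  induction S with
  | nil => simp [ofPositions, tauOfList, xiVal, countAbove]
  | cons p S ih =>
    have hcard : #S.toFinset = S.length := List.toFinset_card_of_nodup (hS.of_cons.imp ne_of_lt)
    rw [ofPositions, tauOfList_cons, length_ofPositions, Perm.mul_apply,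
      val_cyc_apply (Nat.le_add_left _ _) (add_length_lt hS hN),
      ih hS.of_cons (fun q hq => hN q (List.mem_cons_of_mem p hq)), List.toFinset_cons,
      xiVal_insert (fun q hq => List.rel_of_pairwise_cons hS (List.mem_toFinset.1 hq)), hcard]

theorem mem_XiSet_of_val_eq_xiVal {N : ℕ} {τ : Perm (Fin N)} {P : Finset ℕ}
    (hP : ∀ p ∈ P, p < N) (hτ : ∀ x, (τ x : ℕ) = xiVal P x) : τ ∈ XiSet N := by
  intro k _
  have hk := countAbove_add_lt hP k.isLt
  refine ⟨⟨countAbove P k, by omega⟩, ⟨countAbove P k + k, hk⟩,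
    map_injective Fin.valEmbedding ?_⟩
  rw [Fin.map_valEmbedding_Icc, map_eq_image, image_image]
  refine eq_of_subset_of_card_le (fun y hy => ?_) ?_
  · obtain ⟨x, hx, rfl⟩ := mem_image.1 hy
    simpa [hτ] using xiVal_mem_Icc (P := P) (Fin.le_def.1 (mem_Iic.1 hx))
  · rw [card_image_of_injective _ (Fin.valEmbedding.injective.comp τ.injective), Fin.card_Iic,
      Nat.card_Icc]
    dsimp only
    omega

def leftSet {N : ℕ} [NeZero N] (τ : Perm (Fin N)) : Finset ℕ :=
  ({x | τ x < τ 0} : Finset (Fin N)).map Fin.valEmbedding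

section leftSet

variable {N : ℕ} [NeZero N] {τ : Perm (Fin N)}

lemma mem_leftSet {m : ℕ} : m ∈ leftSet τ ↔ ∃ h : m < N, τ ⟨m, h⟩ < τ 0 := by
  simp [leftSet, Fin.exists_iff]

lemma card_leftSet : #(leftSet τ) = τ 0 := by
  have : ({x | τ x < τ 0} : Finset (Fin N)) = (Iio (τ 0)).map τ.symm.toEmbedding := by
    ext x
    simp [mem_map_equiv]
  rw [leftSet, card_map, this, card_map, Fin.card_Iio]

lemma pos_of_mem_leftSet {m : ℕ} (hm : m ∈ leftSet τ) : 0 < m := by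
  obtain ⟨h, hlt⟩ := mem_leftSet.1 hm
  refine Nat.pos_of_ne_zero fun h0 => ?_
  subst h0
  exact lt_irrefl _ hlt

lemma lt_of_mem_leftSet {m : ℕ} (hm : m ∈ leftSet τ) : m < N := (mem_leftSet.1 hm).1

end leftSet

lemma add_one_eq_or_eq_add_one_of_insert_Icc {x a b A B : ℕ} (hab : a ≤ b) (hx : x ∉ Icc a b)
    (h : insert x (Icc a b) = Icc A B) : x + 1 = a ∨ x = b + 1 := by
  have key (y : ℕ) : A ≤ y ∧ y ≤ B ↔ y = x ∨ a ≤ y ∧ y ≤ b := by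
    simpa using (Finset.ext_iff.1 h y).symm
  have := key a; have := key b; have := key x; have := key (x + 1); have := key (x - 1)
  rw [mem_Icc] at hx
  omega

lemma exists_image_Iic_eq_Icc {N : ℕ} {τ : Perm (Fin N)} (hτ : τ ∈ XiSet N) (k : Fin N) :
    ∃ A B : ℕ, (Iic k).image (fun x => (τ x : ℕ)) = Icc A B := by
  rcases Nat.eq_zero_or_pos k with hk | hk
  · refine ⟨τ k, τ k, ?_⟩
    have : Iic k = {k} := by
      ext y
      simp only [mem_Iic, mem_singleton, Fin.le_def, Fin.ext_iff]
      omega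
    rw [this, image_singleton, Icc_self]
  · obtain ⟨a, b, hab⟩ := hτ k hk
    refine ⟨a, b, ?_⟩
    rw [← Fin.map_valEmbedding_Icc, ← hab, map_eq_image, image_image]
    rfl

lemma image_Iic_succ {N m : ℕ} (f : Fin N → ℕ) (hm : m + 1 < N) :
    (Iic (⟨m + 1, hm⟩ : Fin N)).image f =
      insert (f ⟨m + 1, hm⟩) ((Iic ⟨m, by omega⟩).image f) := by
  have : Iic (⟨m + 1, hm⟩ : Fin N) = insert ⟨m + 1, hm⟩ (Iic ⟨m, by omega⟩) := by
    ext z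
    simp only [mem_Iic, mem_insert, Fin.le_def, Fin.ext_iff]
    omega
  rw [this, image_insert]

lemma apply_succ_notMem_image_Iic {N m : ℕ} {f : Fin N → ℕ} (hf : Function.Injective f)
    (hm : m + 1 < N) : f ⟨m + 1, hm⟩ ∉ (Iic ⟨m, by omega⟩).image f := by
  intro h
  obtain ⟨z, hz, hzf⟩ := mem_image.1 h
  have := Fin.le_def.1 (mem_Iic.1 hz)
  rw [hf hzf] at this
  exact Nat.not_succ_le_self m this

section XiSet

variable {N : ℕ} [NeZero N] {τ : Perm (Fin N)}

theorem image_Iic_eq_Icc_of_mem_XiSet (hτ : τ ∈ XiSet N) (m : ℕ) (hm : m < N) :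
    (Iic (⟨m, hm⟩ : Fin N)).image (fun x => (τ x : ℕ)) =
        Icc (countAbove (leftSet τ) m) (countAbove (leftSet τ) m + m) ∧
      (τ ⟨m, hm⟩ : ℕ) = xiVal (leftSet τ) m := by
  set P := leftSet τ
  have h0 : ∀ p ∈ P, 0 < p := fun p => pos_of_mem_leftSet
  have hcard : #P = τ 0 := card_leftSet
  induction m with
  | zero =>
    have : Iic (⟨0, hm⟩ : Fin N) = {0} := by
      ext y
      simp only [mem_Iic, mem_singleton, Fin.le_def, Fin.ext_iff]
      simp
    rw [this, image_singleton, xiVal_zero h0, countAbove_eq_card h0, hcard]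
    exact ⟨Icc_self _ |>.symm, rfl⟩
  | succ m ih =>
    have hf : Function.Injective fun x => (τ x : ℕ) := Fin.val_injective.comp τ.injective
    obtain ⟨hI, -⟩ := ih (by omega)
    have hnew := apply_succ_notMem_image_Iic hf hm
    obtain ⟨A, B, hAB⟩ := exists_image_Iic_eq_Icc hτ ⟨m + 1, hm⟩
    rw [image_Iic_succ, hI] at hAB
    rw [hI] at hnew
    have hstep := add_one_eq_or_eq_add_one_of_insert_Icc (by omega) hnew hAB
    have hmem : m + 1 ∈ P ↔ (τ ⟨m + 1, hm⟩ : ℕ) < #P := by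
      rw [mem_leftSet, hcard]
      exact ⟨fun ⟨_, h⟩ => h, fun h => ⟨hm, h⟩⟩
    have hrec := countAbove_eq_countAbove_add_one_add (P := P) (m := m)
    have hle := countAbove_le_card (P := P) (m := m)
    have hge := countAbove_le_add (P := P) (x := 0) (m := m)
    rw [countAbove_eq_card h0] at hge
    rw [image_Iic_succ, hI, xiVal]
    by_cases h : m + 1 ∈ P
    all_goals
      simp only [h, if_true, if_false, true_iff, false_iff, not_lt] at hrec hmem ⊢
      refine ⟨?_, by omega⟩
      ext z
      simp only [mem_insert, mem_Icc]
      omega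

theorem val_eq_xiVal_of_mem_XiSet (hτ : τ ∈ XiSet N) (x : Fin N) :
    (τ x : ℕ) = xiVal (leftSet τ) x :=
  (image_Iic_eq_Icc_of_mem_XiSet hτ x x.isLt).2

lemma tauOfList_ofPositions_sort_leftSet (hτ : τ ∈ XiSet N) :
    tauOfList N (ofPositions (leftSet τ).sort) = τ := by
  ext x
  rw [val_tauOfList_ofPositions (sortedLT_sort _).pairwise
      (fun p hp => lt_of_mem_leftSet ((mem_sort _).1 hp)),
    sort_toFinset, val_eq_xiVal_of_mem_XiSet hτ]

end XiSet

lemma admissible_sort_leftSet {N : ℕ} [NeZero N] (τ : Perm (Fin N)) :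
    Admissible N (leftSet τ).sort :=
  ⟨(sortedLT_sort _).pairwise, fun _ hp =>
    ⟨pos_of_mem_leftSet ((mem_sort _).1 hp), lt_of_mem_leftSet ((mem_sort _).1 hp)⟩⟩

lemma leftSet_eq_of_val_eq_xiVal {N : ℕ} [NeZero N] {τ : Perm (Fin N)} {P : Finset ℕ}
    (hP : ∀ p ∈ P, 0 < p ∧ p < N) (hτ : ∀ x, (τ x : ℕ) = xiVal P x) :
    leftSet τ = P := by
  have h0 : ∀ p ∈ P, 0 < p := fun p hp => (hP p hp).1
  have hτ0 : (τ 0 : ℕ) = #P := by rw [hτ, Fin.val_zero, xiVal_zero h0]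
  ext m
  rw [mem_leftSet]
  constructor
  · rintro ⟨hm, hlt⟩
    rwa [Fin.lt_def, hτ, hτ0, xiVal_lt_card_iff h0] at hlt
  · intro hm
    refine ⟨(hP m hm).2, ?_⟩
    rwa [Fin.lt_def, hτ, hτ0, xiVal_lt_card_iff h0]

theorem tauOfList_mem_XiSet {N : ℕ} [NeZero N] {L : List ℕ} (hL : GoodList N L) :
    tauOfList N L ∈ XiSet N := by
  obtain ⟨S, ⟨hS, hSN⟩, rfl⟩ := exists_admissible_of_goodList hL
  exact mem_XiSet_of_val_eq_xiVal (fun p hp => (hSN p (List.mem_toFinset.1 hp)).2)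
    (val_tauOfList_ofPositions hS fun p hp => (hSN p hp).2)

theorem ofPositions_sort_leftSet_tauOfList {N : ℕ} [NeZero N] {L : List ℕ} (hL : GoodList N L) :
    ofPositions (leftSet (tauOfList N L)).sort = L := by
  obtain ⟨S, ⟨hS, hSN⟩, rfl⟩ := exists_admissible_of_goodList hL
  rw [leftSet_eq_of_val_eq_xiVal (fun p hp => hSN p (List.mem_toFinset.1 hp))
      (val_tauOfList_ofPositions hS fun p hp => (hSN p hp).2),
    (List.toFinset_sort _ (hS.imp ne_of_lt)).2 (hS.imp le_of_lt)]

/-- Every permutation `τ_{(j_k,...,j_1)}` built from admissible data belongs to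
Ξ_N, and every element of Ξ_N arises this way from a unique choice of data. -/
theorem tau_mem_Xi_and_unique (N : ℕ) [NeZero N] :
    (∀ L : List ℕ, GoodList N L → tauOfList N L ∈ XiSet N) ∧
    (∀ τ ∈ XiSet N, ∃! L : List ℕ, GoodList N L ∧ tauOfList N L = τ) := by
  refine ⟨fun L => tauOfList_mem_XiSet, fun τ hτ => ?_⟩
  refine ⟨_, ⟨goodList_ofPositions (admissible_sort_leftSet τ),
    tauOfList_ofPositions_sort_leftSet hτ⟩, ?_⟩
  rintro L ⟨hL, rfl⟩
  exact (ofPositions_sort_leftSet_tauOfList hL).symm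
end

section
/- Every permutation ν_i appearing in a contiguous path from the identity to w₀ in S_N belongs to Ξ_N, i.e., ν_i([1,k]) is an interval for all 2 ≤ k ≤ N. -/
/-- A contiguous path in `S_N` (0-based): a sequence
`id = ν₁ ↦ ν₂ ↦ ... ↦ ν_{M+1} = w₀` of permutations of `Fin N` in which each
step interchanges two adjacent entries `m < n` (with `m` to the left of `n`) of
the one-line notation, and the integer `m` may be moved to the right only when
all smaller integers have already been pulled to the right of it. -/
structure ContigPath (N : ℕ) where
  /-- number of steps -/
  M : ℕ
  /-- the permutations along the path -/
  ν : Fin (M + 1) → Equiv.Perm (Fin N)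
  /-- the position at which step `i` swaps the entries in slots `pos i`, `pos i + 1` -/
  pos : Fin M → Fin N
  hpos : ∀ i : Fin M, (pos i).val + 1 < N
  start : ν 0 = 1
  finish : ν (Fin.last M) = Fin.revPerm
  step : ∀ i : Fin M,
    ν i.succ = ν i.castSucc * Equiv.swap (pos i) ⟨(pos i).val + 1, hpos i⟩
  incr : ∀ i : Fin M,
    ν i.castSucc (pos i) < ν i.castSucc ⟨(pos i).val + 1, hpos i⟩
  rule : ∀ i : Fin M, ∀ j : Fin N, j < ν i.castSucc (pos i) →
    pos i < (ν i.castSucc).symm j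

lemma swap_image_Iic_of_ne {N : ℕ} (p p1 k : Fin N) (h1 : p1.val = p.val + 1)
    (hk : k ≠ p) : (Finset.Iic k).image (Equiv.swap p p1) = Finset.Iic k := by
  have hpp1 : p < p1 := by simp [Fin.lt_def, h1]
  rcases lt_or_gt_of_ne hk with h | h
  · rw [Finset.image_congr (g := id) ?_, Finset.image_id]
    intro x hx
    simp only [Finset.mem_coe, Finset.mem_Iic] at hx
    have hxp : x ≠ p := ne_of_lt (lt_of_le_of_lt hx h)
    have hxp1 : x ≠ p1 := ne_of_lt (lt_of_le_of_lt hx (h.trans hpp1))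
    simp [Equiv.swap_apply_of_ne_of_ne hxp hxp1]
  · have hp1k : p1 ≤ k := by
      have := Fin.lt_def.mp h
      simp only [Fin.le_def, h1]; omega
    have hmem : ∀ x ∈ Finset.Iic k, Equiv.swap p p1 x ∈ Finset.Iic k := by
      intro x hx
      simp only [Finset.mem_Iic] at *
      rw [Equiv.swap_apply_def]
      split_ifs
      · exact hp1k
      · exact le_of_lt h
      · exact hx
    apply Finset.Subset.antisymm
    · intro x hx
      obtain ⟨y, hy, rfl⟩ := Finset.mem_image.mp hx
      exact hmem y hy
    · intro x hx
      exact Finset.mem_image.mpr ⟨Equiv.swap p p1 x, hmem x hx, Equiv.swap_apply_self _ _ _⟩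

lemma step_preserves {N : ℕ} (σ : Equiv.Perm (Fin N)) (p p1 : Fin N)
    (h1 : p1.val = p.val + 1)
    (hinc : σ p < σ p1)
    (hrule : ∀ j : Fin N, j < σ p → p < σ.symm j)
    (ih : ∀ k : Fin N, ∃ a b : Fin N, (Finset.Iic k).image σ = Finset.Icc a b) :
    ∀ k : Fin N, ∃ a b : Fin N,
      (Finset.Iic k).image (σ * Equiv.swap p p1) = Finset.Icc a b := by
  intro k
  have himg : (Finset.Iic k).image ⇑(σ * Equiv.swap p p1)
      = ((Finset.Iic k).image (Equiv.swap p p1)).image σ := by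
    rw [Finset.image_image]; rfl
  by_cases hk : k = p
  · subst hk
    obtain ⟨a, b, hab⟩ := ih k
    obtain ⟨a', b', hab'⟩ := ih p1
    set m := σ k with hm
    set n := σ p1 with hn
    have hm_mem : m ∈ Finset.Icc a b := by
      rw [← hab]; exact Finset.mem_image_of_mem σ (Finset.mem_Iic.mpr le_rfl)
    have hamin : ∀ x ∈ Finset.Icc a b, m ≤ x := by
      intro x hx
      rw [← hab] at hx
      obtain ⟨y, hy, rfl⟩ := Finset.mem_image.mp hx
      by_contra hlt
      push_neg at hlt
      have h2 := hrule (σ y) hlt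
      rw [Equiv.symm_apply_apply] at h2
      exact absurd (Finset.mem_Iic.mp hy) (not_le.mpr h2)
    have hma := (Finset.mem_Icc.mp hm_mem).1
    have hmb := (Finset.mem_Icc.mp hm_mem).2
    have ha : a = m := le_antisymm hma (hamin a (Finset.mem_Icc.mpr ⟨le_rfl, le_trans hma hmb⟩))
    have hIic1 : Finset.Iic p1 = insert p1 (Finset.Iic k) := by
      ext x
      simp only [Finset.mem_Iic, Finset.mem_insert, Fin.le_def, Fin.ext_iff, h1]
      omega
    have himg1 : Finset.Icc a' b' = insert n (Finset.Icc a b) := by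
      rw [← hab', hIic1, Finset.image_insert, hab]
    have hn_not : n ∉ Finset.Icc a b := by
      rw [← hab]
      intro hmem
      obtain ⟨y, hy, hyn⟩ := Finset.mem_image.mp hmem
      have hyp1 : y = p1 := σ.injective hyn
      subst hyp1
      have := Finset.mem_Iic.mp hy
      simp only [Fin.le_def, h1] at this
      omega
    have hbn : b < n := by
      by_contra hc
      push_neg at hc
      exact hn_not (Finset.mem_Icc.mpr ⟨ha ▸ hinc.le, hc⟩)
    have hn_val : n.val = b.val + 1 := by
      by_contra hc
      have hb1 : b.val + 1 < n.val := by
        have := Fin.lt_def.mp hbn; omega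
      have hcN : b.val + 1 < N := lt_trans hb1 n.isLt
      set c : Fin N := ⟨b.val + 1, hcN⟩ with hcdef
      have ha'a : a' ≤ a := by
        have : a ∈ Finset.Icc a' b' := by
          rw [himg1]
          exact Finset.mem_insert_of_mem (Finset.mem_Icc.mpr ⟨le_rfl, le_trans hma hmb⟩)
        exact (Finset.mem_Icc.mp this).1
      have hnb' : n ≤ b' := by
        have : n ∈ Finset.Icc a' b' := by
          rw [himg1]; exact Finset.mem_insert_self _ _
        exact (Finset.mem_Icc.mp this).2
      have hc_mem : c ∈ Finset.Icc a' b' := by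
        refine Finset.mem_Icc.mpr ⟨le_trans ha'a ?_, le_trans ?_ hnb'⟩
        · have := Fin.le_def.mp (le_trans hma hmb)
          simp only [Fin.le_def, hcdef]; omega
        · simp only [Fin.le_def, hcdef]; omega
      rw [himg1] at hc_mem
      rcases Finset.mem_insert.mp hc_mem with h | h
      · exact hc (by rw [← h])
      · have := Fin.le_def.mp (Finset.mem_Icc.mp h).2
        simp only [hcdef] at this
        omega
    -- now compute the new image
    have hswap : (Finset.Iic k).image (Equiv.swap k p1)
        = insert p1 (Finset.Iio k) := by
      rw [← Finset.Iio_insert, Finset.image_insert, Equiv.swap_apply_left]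
      congr 1
      rw [Finset.image_congr (g := id) ?_, Finset.image_id]
      intro x hx
      simp only [Finset.mem_coe, Finset.mem_Iio] at hx
      have hxp : x ≠ k := ne_of_lt hx
      have hxp1 : x ≠ p1 := by
        intro h; subst h
        have := Fin.lt_def.mp hx; omega
      simp [Equiv.swap_apply_of_ne_of_ne hxp hxp1]
    have hIio : (Finset.Iio k).image σ = (Finset.Icc a b).erase m := by
      have h3 : Finset.Icc a b = insert m ((Finset.Iio k).image σ) := by
        rw [← hab, ← Finset.Iio_insert, Finset.image_insert]
      have hm_not : m ∉ (Finset.Iio k).image σ := by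
        intro hmem
        obtain ⟨y, hy, hyn⟩ := Finset.mem_image.mp hmem
        have : y = k := σ.injective hyn
        subst this
        exact absurd (Finset.mem_Iio.mp hy) (lt_irrefl _)
      rw [h3, Finset.erase_insert hm_not]
    have haN : a.val + 1 < N := by
      have h4 := Fin.lt_def.mp hbn
      have h5 := Fin.le_def.mp (le_trans hma hmb)
      have h6 := Fin.le_def.mp hma
      omega
    refine ⟨⟨a.val + 1, haN⟩, n, ?_⟩
    rw [himg, hswap, Finset.image_insert, hIio]
    ext x
    simp only [Finset.mem_insert, Finset.mem_erase, Finset.mem_Icc, Fin.le_def,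
      Fin.ext_iff, ne_eq, ← hn]
    have h4 := Fin.le_def.mp hma
    have h5 := Fin.le_def.mp hmb
    have h6 : a.val = m.val := congrArg Fin.val ha
    omega
  · rw [himg, swap_image_Iic_of_ne p p1 k h1 hk]
    exact ih k

/-- Every permutation appearing in a contiguous path from the identity to `w₀`
belongs to Ξ_N. -/
theorem contigPath_mem_Xi (N : ℕ) (P : ContigPath N) (i : Fin (P.M + 1)) :
    P.ν i ∈ XiSet N := by
  suffices h : ∀ k : Fin N, ∃ a b : Fin N,
      (Finset.Iic k).image (P.ν i) = Finset.Icc a b from fun k _ => h k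
  induction i using Fin.induction with
  | zero =>
    intro k
    refine ⟨⟨0, Nat.lt_of_le_of_lt (Nat.zero_le _) k.isLt⟩, k, ?_⟩
    rw [P.start]
    ext x
    simp only [Equiv.Perm.coe_one, Finset.image_id, Finset.mem_Iic,
      Finset.mem_Icc, Fin.le_def]
    omega
  | succ i ih =>
    rw [P.step i]
    exact step_preserves (P.ν i.castSucc) (P.pos i) ⟨(P.pos i).val + 1, P.hpos i⟩
      rfl (P.incr i) (P.rule i) ih
end

section
/- There is a bijection between the set of contiguous paths in S_N and the set of reduced expressions w = s_{p_1} s_{p_2} ⋯ s_{p_M} of the longest element w₀ ∈ S_N (M = binom(N,2)) such that every initial subword s_{p_1}⋯s_{p_i}, for 1 ≤ i ≤ M-1, belongs to Ξ_N; the bijection sends such a reduced word to the path of its initial subwords. -/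
/-- The simple transposition `s_p = (p, p+1)` of `Fin N` (and `1` if out of range). -/
def swapAt (N : ℕ) (p : ℕ) : Equiv.Perm (Fin N) :=
  if h : p + 1 < N then Equiv.swap ⟨p, Nat.lt_of_succ_lt h⟩ ⟨p + 1, h⟩ else 1

/-- The product `s_{p_1} s_{p_2} ⋯ s_{p_M}` of the simple transpositions
indexed by a list of positions. -/
def wordProd (N : ℕ) (L : List ℕ) : Equiv.Perm (Fin N) :=
  (L.map (swapAt N)).prod

/-- A reduced expression `s_{p_1} ⋯ s_{p_M}` of the longest element `w₀ ∈ S_N`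
(so `M = binom(N,2)`) all of whose proper initial subwords lie in Ξ_N. -/
def XiRedWord (N : ℕ) (L : List ℕ) : Prop :=
  L.length = N * (N - 1) / 2 ∧ (∀ p ∈ L, p + 1 < N) ∧
    wordProd N L = (Fin.revPerm : Equiv.Perm (Fin N)) ∧
    ∀ i : ℕ, 1 ≤ i → i ≤ L.length - 1 → wordProd N (L.take i) ∈ XiSet N

/-!
An adjacent swap changes the number of inversions by exactly one, upwards precisely when it
exchanges an ascent `m < n`. Hence the `i`-th permutation of a contiguous path has `i` inversions,
so the path has `binom(N,2)` steps and its word is a reduced expression of `w₀`; conversely, in a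
word of length `binom(N,2)` for `w₀` every step must exchange an ascent.

Along a step `σ ↦ σ * (p p+1)` the image of an initial segment `[0,k]` changes only for `k = p`,
where it becomes `σ([0,p+1])` minus `σ p`. Given that `σ([0,p+1])` is an interval, this is again an
interval exactly when `σ p` is its minimum, i.e. when every smaller value lies right of `p`: this
is the contiguity rule, so Ξ-membership of the initial subwords and the rule determine each other.
-/

open Finset Equiv

section Inversions

variable {N : ℕ}

def invCount (σ : Perm (Fin N)) : ℕ :=
  #{x : Fin N × Fin N | x.1 < x.2 ∧ σ x.2 < σ x.1}

lemma invCount_one : invCount (1 : Perm (Fin N)) = 0 := by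
  simp only [invCount, Perm.one_apply, card_eq_zero]
  exact filter_eq_empty_iff.2 fun x _ h => h.1.not_gt h.2

lemma invCount_revPerm : invCount (Fin.revPerm : Perm (Fin N)) = N * (N - 1) / 2 := by
  have hcount (b : Fin N) : #{a : Fin N | a < b} = b.val := by
    rw [filter_gt_eq_Iio, Fin.card_Iio]
  simp only [invCount, Fin.revPerm_apply, Fin.rev_lt_rev, and_self]
  rw [card_filter, Fintype.sum_prod_type_right]
  simp_rw [← card_filter, hcount]
  rw [Fin.sum_univ_eq_sum_range (fun i => i), sum_range_id]

variable {p q : Fin N}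

lemma swap_lt_swap_of_succ (hpq : q.val = p.val + 1) {i j : Fin N} (hij : i < j)
    (hne : ¬(i = p ∧ j = q)) : swap p q i < swap p q j := by
  rw [Fin.lt_def] at hij ⊢
  simp only [swap_apply_def, Fin.ext_iff] at hne ⊢
  split_ifs <;> omega

lemma invCount_mul_swap_of_lt (σ : Perm (Fin N)) (hpq : q.val = p.val + 1) (h : σ p < σ q) :
    invCount (σ * swap p q) = invCount σ + 1 := by
  have hpq_lt : p < q := by rw [Fin.lt_def]; omega
  have hinv : univ.filter (fun x : Fin N × Fin N =>
        x.1 < x.2 ∧ (σ * swap p q) x.2 < (σ * swap p q) x.1)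
      = insert (p, q) ((univ.filter fun x : Fin N × Fin N => x.1 < x.2 ∧ σ x.2 < σ x.1).map
          ((swap p q).prodCongr (swap p q)).toEmbedding) := by
    ext ⟨i, j⟩
    rw [mem_filter, mem_insert, mem_map_equiv, mem_filter]
    simp only [mem_univ, true_and, prodCongr_symm, prodCongr_apply, symm_swap, Perm.mul_apply,
      Prod.mk.injEq, Prod.map_fst, Prod.map_snd]
    by_cases hij : i = p ∧ j = q
    · obtain ⟨rfl, rfl⟩ := hij
      simpa using ⟨hpq_lt, h⟩
    refine ⟨fun hσ => .inr ⟨swap_lt_swap_of_succ hpq hσ.1 hij, hσ.2⟩, ?_⟩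
    rintro (hij' | ⟨hlt, hσ⟩)
    · exact absurd hij' hij
    refine ⟨?_, hσ⟩
    simpa using swap_lt_swap_of_succ hpq hlt fun ⟨hi, hj⟩ => h.not_gt (by rwa [hi, hj] at hσ)
  rw [invCount, hinv, card_insert_of_notMem, card_map, invCount]
  simp [hpq_lt.not_gt]

lemma invCount_mul_swap_of_gt (σ : Perm (Fin N)) (hpq : q.val = p.val + 1) (h : σ q < σ p) :
    invCount (σ * swap p q) + 1 = invCount σ := by
  simpa [mul_assoc] using (invCount_mul_swap_of_lt (σ * swap p q) hpq (by simpa using h)).symm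

end Inversions

section Words

variable {N : ℕ}

lemma swapAt_of_lt {p : ℕ} (h : p + 1 < N) : swapAt N p = swap ⟨p, by omega⟩ ⟨p + 1, h⟩ :=
  dif_pos h

@[simp] lemma wordProd_nil : wordProd N [] = 1 := rfl

@[simp] lemma wordProd_cons (p : ℕ) (L : List ℕ) :
    wordProd N (p :: L) = swapAt N p * wordProd N L := by
  simp [wordProd]

@[simp] lemma wordProd_append (L₁ L₂ : List ℕ) :
    wordProd N (L₁ ++ L₂) = wordProd N L₁ * wordProd N L₂ := by
  simp [wordProd]

lemma wordProd_take_add_one {L : List ℕ} {i : ℕ} (hi : i < L.length) :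
    wordProd N (L.take (i + 1)) = wordProd N (L.take i) * swapAt N L[i] := by
  rw [List.take_add_one, List.getElem?_eq_getElem hi, Option.toList_some, wordProd_append]
  simp [wordProd]

lemma invCount_mul_swapAt_le (σ : Perm (Fin N)) (p : ℕ) :
    invCount (σ * swapAt N p) ≤ invCount σ + 1 := by
  unfold swapAt
  split_ifs with h
  · have hne : σ ⟨p, by omega⟩ ≠ σ ⟨p + 1, h⟩ := σ.injective.ne (by simp)
    rcases lt_or_gt_of_ne hne with hlt | hgt
    · exact (invCount_mul_swap_of_lt σ rfl hlt).le
    · have := invCount_mul_swap_of_gt σ rfl hgt; omega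
  · simp

lemma invCount_mul_wordProd_le (σ : Perm (Fin N)) (L : List ℕ) :
    invCount (σ * wordProd N L) ≤ invCount σ + L.length := by
  induction L generalizing σ with
  | nil => simp
  | cons p L ih =>
    rw [wordProd_cons, ← mul_assoc, List.length_cons]
    have := invCount_mul_swapAt_le σ p
    have := ih (σ * swapAt N p)
    omega

lemma lt_of_invCount_wordProd_eq_length {L : List ℕ} (hL : invCount (wordProd N L) = L.length)
    {i : ℕ} (hi : i < L.length) (h : L[i] + 1 < N) :
    wordProd N (L.take i) ⟨L[i], by omega⟩ < wordProd N (L.take i) ⟨L[i] + 1, h⟩ := by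
  -- a descent at step `i` would leave at most `(i - 1) + (L.length - i - 1)` inversions
  have hprefix := invCount_mul_wordProd_le (1 : Perm (Fin N)) (L.take i)
  rw [one_mul, invCount_one, List.length_take] at hprefix
  set σ := wordProd N (L.take i)
  by_contra hle
  have hgt := lt_of_le_of_ne (not_lt.1 hle) (σ.injective.ne (by simp))
  have hsplit : wordProd N L = σ * swapAt N L[i] * wordProd N (L.drop (i + 1)) := by
    rw [← wordProd_take_add_one hi, ← wordProd_append, List.take_append_drop]
  have hdescent := invCount_mul_swap_of_gt σ rfl hgt
  have hsuffix := invCount_mul_wordProd_le (σ * swapAt N L[i]) (L.drop (i + 1))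
  rw [swapAt_of_lt h] at hsplit hsuffix
  rw [List.length_drop, ← hsplit, hL] at hsuffix
  omega

end Words

section Xi

variable {N : ℕ}

lemma one_mem_xiSet : (1 : Perm (Fin N)) ∈ XiSet N := by
  intro k _
  refine ⟨⟨0, k.pos⟩, k, ?_⟩
  ext x
  simp only [Perm.coe_one, image_id, mem_Iic, mem_Icc, Fin.le_def]
  omega

lemma revPerm_mem_xiSet : (Fin.revPerm : Perm (Fin N)) ∈ XiSet N := by
  intro k _
  refine ⟨k.rev, ⟨N - 1, by omega⟩, ?_⟩
  ext x
  simp only [mem_image, mem_Iic, mem_Icc, Fin.revPerm_apply, Fin.le_def, Fin.val_rev]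
  refine ⟨?_, fun h => ⟨x.rev, ?_, x.rev_rev⟩⟩
  · rintro ⟨y, hy, rfl⟩
    simp only [Fin.val_rev]
    omega
  · simp only [Fin.val_rev]
    omega

lemma mem_image_Iic_iff (σ : Perm (Fin N)) (k x : Fin N) :
    x ∈ (Iic k).image σ ↔ σ.symm x ≤ k := by
  simp only [mem_image, mem_Iic]
  exact ⟨fun ⟨y, hy, hyx⟩ => by rwa [← hyx, symm_apply_apply], fun h => ⟨_, h, by simp⟩⟩

variable {σ : Perm (Fin N)} {p q : Fin N}

lemma mem_image_Iic_mul_swap_iff (k x : Fin N) :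
    x ∈ (Iic k).image (σ * swap p q) ↔ swap p q (σ.symm x) ≤ k := by
  rw [mem_image_Iic_iff, Perm.mul_def, symm_trans_apply, symm_swap]

lemma image_Iic_mul_swap_of_ne (hpq : q.val = p.val + 1) {k : Fin N} (hk : k ≠ p) :
    (Iic k).image (σ * swap p q) = (Iic k).image σ := by
  ext x
  rw [mem_image_Iic_mul_swap_iff, mem_image_Iic_iff, swap_apply_def]
  simp only [Fin.le_def, Fin.ext_iff] at hk ⊢
  split_ifs <;> omega

lemma image_Iic_mul_swap_self (hpq : q.val = p.val + 1) :
    (Iic p).image (σ * swap p q) = ((Iic q).image σ).erase (σ p) := by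
  ext x
  rw [mem_erase, mem_image_Iic_mul_swap_iff, mem_image_Iic_iff, swap_apply_def, ne_eq,
    ← σ.symm_apply_eq]
  simp only [Fin.le_def, Fin.ext_iff]
  split_ifs <;> omega

lemma mul_swap_mem_xiSet (hσ : σ ∈ XiSet N) (hpq : q.val = p.val + 1) (hlt : σ p < σ q)
    (hrule : ∀ j < σ p, p < σ.symm j) : σ * swap p q ∈ XiSet N := by
  intro k hk
  rcases ne_or_eq k p with hkp | hkp
  · rw [image_Iic_mul_swap_of_ne hpq hkp]
    exact hσ k hk
  subst k
  obtain ⟨a, b, hab⟩ := hσ q (by omega)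
  have hmem (x : Fin N) : x ∈ Icc a b ↔ σ.symm x ≤ q := by rw [← hab, mem_image_Iic_iff]
  have hpab := mem_Icc.1 ((hmem (σ p)).2 (by simp [Fin.le_def, hpq]))
  have ha : a = σ p := by
    refine hpab.1.eq_or_lt.resolve_right fun hap => hlt.not_gt ?_
    have haq : σ.symm a = q := by
      have := Fin.lt_def.1 (hrule a hap)
      have := Fin.le_def.1 ((hmem a).1 (left_mem_Icc.2 (hpab.1.trans hpab.2)))
      exact Fin.ext (by omega)
    rwa [← haq, apply_symm_apply]
  refine ⟨Order.succ (σ p), b, ?_⟩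
  rw [image_Iic_mul_swap_self hpq, hab, ha, Icc_erase_left,
    Icc_succ_left_eq_Ioc_of_not_isMax (not_isMax_of_lt hlt)]

lemma lt_symm_of_mul_swap_mem_xiSet (hpq : q.val = p.val + 1) (hτ : σ * swap p q ∈ XiSet N)
    (hlt : σ p < σ q) {j : Fin N} (hj : j < σ p) : p < σ.symm j := by
  by_contra! hle
  have hne : σ.symm j ≠ p := fun h => hj.ne (by rw [← h, apply_symm_apply])
  obtain ⟨a, b, hab⟩ := hτ p (by have := Fin.lt_def.1 (lt_of_le_of_ne hle hne); omega)
  rw [image_Iic_mul_swap_self hpq] at hab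
  have hmem (x : Fin N) : x ∈ Icc a b ↔ x ≠ σ p ∧ σ.symm x ≤ q := by
    rw [← hab, mem_erase, mem_image_Iic_iff]
  have hja := (mem_Icc.1 ((hmem j).2 ⟨hj.ne, hle.trans (by simp [Fin.le_def, hpq])⟩)).1
  have hqb := (mem_Icc.1 ((hmem (σ q)).2 ⟨hlt.ne', by simp⟩)).2
  exact ((hmem (σ p)).1 (mem_Icc.2 ⟨hja.trans hj.le, hlt.le.trans hqb⟩)).1 rfl

end Xi

namespace XiRedWord

variable {N : ℕ} {L : List ℕ} {i : ℕ}

lemma getElem_add_one_lt (hL : XiRedWord N L) (hi : i < L.length) : L[i] + 1 < N :=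
  hL.2.1 _ (L.getElem_mem hi)

lemma wordProd_take_mem_xiSet (hL : XiRedWord N L) (hi : i ≤ L.length) :
    wordProd N (L.take i) ∈ XiSet N := by
  obtain rfl | hi0 := Nat.eq_zero_or_pos i
  · simpa using one_mem_xiSet
  obtain rfl | hiL := hi.eq_or_lt
  · simpa [hL.2.2.1] using revPerm_mem_xiSet
  exact hL.2.2.2 i hi0 (by omega)

lemma wordProd_take_lt (hL : XiRedWord N L) (hi : i < L.length) :
    wordProd N (L.take i) ⟨L[i], by have := hL.getElem_add_one_lt hi; omega⟩
      < wordProd N (L.take i) ⟨L[i] + 1, hL.getElem_add_one_lt hi⟩ :=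
  lt_of_invCount_wordProd_eq_length (by rw [hL.2.2.1, invCount_revPerm, hL.1]) hi _

end XiRedWord

namespace ContigPath

variable {N : ℕ}

def word (P : ContigPath N) : List ℕ := List.ofFn fun i => (P.pos i).val

@[simp] lemma length_word (P : ContigPath N) : P.word.length = P.M := List.length_ofFn

lemma ν_eq_wordProd (P : ContigPath N) (i : Fin (P.M + 1)) :
    P.ν i = wordProd N (P.word.take i) := by
  induction i using Fin.induction with
  | zero => simp [P.start]
  | succ i ih =>
    rw [P.step, ih, Fin.val_succ, wordProd_take_add_one (by simp)]
    simp [word, swapAt_of_lt (P.hpos i)]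

lemma invCount_ν (P : ContigPath N) (i : Fin (P.M + 1)) : invCount (P.ν i) = i := by
  induction i using Fin.induction with
  | zero => simp [P.start, invCount_one]
  | succ i ih => rw [P.step, invCount_mul_swap_of_lt _ rfl (P.incr i), ih, Fin.val_succ]; rfl

lemma ν_mem_xiSet (P : ContigPath N) (i : Fin (P.M + 1)) : P.ν i ∈ XiSet N := by
  induction i using Fin.induction with
  | zero => simpa [P.start] using one_mem_xiSet
  | succ i ih => rw [P.step]; exact mul_swap_mem_xiSet ih rfl (P.incr i) (P.rule i)

lemma M_eq (P : ContigPath N) : P.M = N * (N - 1) / 2 := by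
  simpa [P.finish, invCount_revPerm] using (P.invCount_ν (Fin.last P.M)).symm

lemma xiRedWord_word (P : ContigPath N) : XiRedWord N P.word := by
  refine ⟨by simp [P.M_eq], ?_, ?_, fun i _ hi => ?_⟩
  · simpa [word] using P.hpos
  · rw [← P.finish, P.ν_eq_wordProd, Fin.val_last, ← P.length_word, List.take_length]
  have hiM : i < P.M + 1 := by simp only [length_word] at hi; omega
  simpa [P.ν_eq_wordProd ⟨i, hiM⟩] using P.ν_mem_xiSet ⟨i, hiM⟩

lemma word_injective : Function.Injective (word : ContigPath N → List ℕ) := by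
  intro P Q h
  have hP := P.ν_eq_wordProd
  have hQ := Q.ν_eq_wordProd
  obtain ⟨M, ν, pos, _⟩ := P
  obtain ⟨M', ν', pos', _⟩ := Q
  obtain rfl : M = M' := by simpa [word] using congrArg List.length h
  obtain rfl : pos = pos' := funext fun i => Fin.ext (congrFun (List.ofFn_injective h) i)
  obtain rfl : ν = ν' := funext fun i => (hP i).trans (hQ i).symm
  rfl

def ofXiRedWord {L : List ℕ} (hL : XiRedWord N L) : ContigPath N where
  M := L.length
  ν i := wordProd N (L.take i)
  pos i := ⟨L[i.val], by have := hL.getElem_add_one_lt i.2; omega⟩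
  hpos i := hL.getElem_add_one_lt i.2
  start := by simp
  finish := by simpa using hL.2.2.1
  step i := by simp [wordProd_take_add_one i.2, swapAt_of_lt (hL.getElem_add_one_lt i.2)]
  incr i := hL.wordProd_take_lt i.2
  rule i _ hj := by
    refine lt_symm_of_mul_swap_mem_xiSet rfl ?_ (hL.wordProd_take_lt i.2) hj
    rw [← swapAt_of_lt (hL.getElem_add_one_lt i.2), ← wordProd_take_add_one i.2]
    exact hL.wordProd_take_mem_xiSet i.2

lemma word_ofXiRedWord {L : List ℕ} (hL : XiRedWord N L) : (ofXiRedWord hL).word = L :=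
  List.ofFn_getElem

end ContigPath

/-- The map sending a contiguous path to the word of positions of its swaps is
a bijection between the set of contiguous paths in `S_N` and the set of reduced
expressions of `w₀` all of whose proper initial subwords lie in Ξ_N (the
inverse sends a reduced word to the path of its initial subwords). -/
theorem contigPath_equiv_redWords (N : ℕ) :
    ∃ f : ContigPath N → List ℕ,
      (∀ P : ContigPath N, f P = List.ofFn (fun i => (P.pos i).val)) ∧
      Function.Injective f ∧
      Set.range f = {L : List ℕ | XiRedWord N L} := by
  refine ⟨ContigPath.word, fun _ => rfl, ContigPath.word_injective, ?_⟩
  ext L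
  refine ⟨?_, fun hL => ⟨ContigPath.ofXiRedWord hL, ContigPath.word_ofXiRedWord hL⟩⟩
  rintro ⟨P, rfl⟩
  exact P.xiRedWord_word
end

section
/- Let Q₁ be the linearly oriented type A_n quiver 1 ← 2 ← ... ← n, and consider a sequence of quiver mutations μ_{k_1}, ..., μ_{k_r} which is a shuffle of the lists (1,2,...,n), (1,2,...,n-1), ..., (1,2), (1), subject to the rule that the occurrence of index j in the m-th list comes after the occurrence of index j+1 in the (m-1)-st list. Then at every step i, the quiver Q_i = μ_{k_{i-1}}⋯μ_{k_1}(Q₁) is an orientation of the A_n graph (path graph on vertices 1,...,n) and the mutation vertex k_i is a sink of Q_i. -/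
/-- `IsShuffleSystem elts ks` : the list `ks` is an allowed shuffle of the
lists `(elts 1, ..., elts l), (elts 1, ..., elts (l-1)), ..., (elts 1, elts 2),
(elts 1)` (where `l = elts.length`), i.e. there is an assignment of positions
`pos v m` (position of the `m`-th occurrence of the `v`-th element, 0-based)
which is bijective onto the positions of `ks`, takes the prescribed values,
lists each row in order, and satisfies the rule that the `v`-th element in row
`m+1` comes after the `(v+1)`-st element in row `m`. -/
def IsShuffleSystem {α : Type*} (elts : List α) (ks : List α) : Prop :=
  ∃ pos : ℕ → ℕ → ℕ,
    (∀ v m, (hv : v < elts.length) → m < elts.length - v →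
      ∃ h : pos v m < ks.length, ks.get ⟨pos v m, h⟩ = elts.get ⟨v, hv⟩) ∧
    (∀ v m m', v < elts.length → m < m' → m' < elts.length - v →
      pos v m < pos v m') ∧
    (∀ v m, v + 1 < elts.length → m < elts.length - (v + 1) →
      pos v m < pos (v + 1) m) ∧
    (∀ v m, v + 1 < elts.length → m < elts.length - (v + 1) →
      pos (v + 1) m < pos v (m + 1)) ∧
    (∀ i : Fin ks.length, ∃ v m, v < elts.length ∧ m < elts.length - v ∧
      pos v m = i.val)

/-- The exchange matrix of the linearly oriented type `A_n` quiver
`1 ← 2 ← ⋯ ← n` (0-based): an arrow `i+1 → i` for each `i`, i.e.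
`b_{i+1,i} = 1`. -/
def AnMat (n : ℕ) : Fin n → Fin n → ℤ := fun i j =>
  if i.val = j.val + 1 then 1 else if i.val + 1 = j.val then -1 else 0

/-- Matrix mutation of a square exchange matrix at the index `k`. -/
def mutSq {n : ℕ} (B : Fin n → Fin n → ℤ) (k : Fin n) : Fin n → Fin n → ℤ :=
  fun i j =>
    if i = k ∨ j = k then -B i j
    else B i j + (|B i k| * B k j + B i k * |B k j|) / 2

/-- Iterated mutation of a square exchange matrix along a list of indices. -/
def mutSeqSq {n : ℕ} (B : Fin n → Fin n → ℤ) (ks : List (Fin n)) :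
    Fin n → Fin n → ℤ :=
  ks.foldl mutSq B

/-- The principal-coefficients (framed) extension of an exchange matrix: the
identity matrix stacked below `B`; rows are indexed by `Fin n ⊕ Fin n`, the
second summand indexing the frozen copies `i'`. -/
def framedMat {n : ℕ} (B : Fin n → Fin n → ℤ) : (Fin n ⊕ Fin n) → Fin n → ℤ :=
  fun i j => Sum.elim (fun a => B a j) (fun a => if a = j then 1 else 0) i

/-- Mutation of an extended (framed) exchange matrix at a mutable index `k`. -/
def mutExt {n : ℕ} (B : (Fin n ⊕ Fin n) → Fin n → ℤ) (k : Fin n) :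
    (Fin n ⊕ Fin n) → Fin n → ℤ :=
  fun i j =>
    if i = Sum.inl k ∨ j = k then -B i j
    else B i j + (|B i k| * B (Sum.inl k) j + B i k * |B (Sum.inl k) j|) / 2

/-- Iterated mutation of an extended exchange matrix along a list of indices. -/
def mutExtSeq {n : ℕ} (B : (Fin n ⊕ Fin n) → Fin n → ℤ) (ks : List (Fin n)) :
    (Fin n ⊕ Fin n) → Fin n → ℤ :=
  ks.foldl mutExt B

theorem tst : True := trivial

/-!
Mutating at a sink only reverses the arrows at that vertex, the correction term of matrix
mutation vanishing. So as long as every mutation is at a sink, the quiver obtained by mutating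
`A_n` along a list `l` is `A_n` with the edge `{a, b}` reversed iff `a` and `b` together occur
an odd number of times in `l`. When the `m`-th copy of `v` is mutated, the shuffle rule says
that `v` and `v + 1` have been mutated `m` times each and `v - 1` has been mutated `m + 1`
times, so both edges at `v` point into `v`: it is a sink.
-/

open Finset

section Mutation

variable {n : ℕ}

/-- Following `AnMat`, `B k j > 0` encodes arrows `k → j`. -/
def IsSink (B : Fin n → Fin n → ℤ) (k : Fin n) : Prop := ∀ j, B k j ≤ 0

theorem mutSq_of_isSink {B : Fin n → Fin n → ℤ} {k : Fin n} (hB : ∀ i j, B i j = -B j i)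
    (hk : IsSink B k) (i j : Fin n) :
    mutSq B k i j = if i = k ∨ j = k then -B i j else B i j := by
  have hik : 0 ≤ B i k := by linarith [hB i k, hk i]
  have hkj : B k j ≤ 0 := hk j
  simp only [mutSq, abs_of_nonneg hik, abs_of_nonpos hkj, mul_neg, add_neg_cancel,
    EuclideanDomain.zero_div, add_zero]

def signedAnMat (n : ℕ) (l : List (Fin n)) (a b : Fin n) : ℤ :=
  (-1) ^ (l.count a + l.count b) * AnMat n a b

theorem signedAnMat_nil : signedAnMat n [] = AnMat n := by
  ext a b
  simp [signedAnMat]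

theorem signedAnMat_skew (l : List (Fin n)) (a b : Fin n) :
    signedAnMat n l a b = -signedAnMat n l b a := by
  unfold signedAnMat AnMat
  rw [add_comm (l.count a)]
  split_ifs <;> omega

theorem natAbs_signedAnMat (l : List (Fin n)) (a b : Fin n) :
    (signedAnMat n l a b).natAbs = if a.val = b.val + 1 ∨ b.val = a.val + 1 then 1 else 0 := by
  unfold signedAnMat AnMat
  split_ifs <;> first | omega | simp

theorem isSink_signedAnMat {l : List (Fin n)} {k : Fin n}
    (hpred : ∀ j : Fin n, j.val + 1 = k.val → l.count j = l.count k + 1)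
    (hsucc : ∀ j : Fin n, k.val + 1 = j.val → l.count j = l.count k) :
    IsSink (signedAnMat n l) k := by
  intro j
  unfold signedAnMat AnMat
  split_ifs with h1 h2
  · rw [hpred j h1.symm, ← add_assoc, ← two_mul, pow_succ, pow_mul]; simp
  · rw [hsucc j h2, ← two_mul, pow_mul]; simp
  · simp

theorem mutSq_signedAnMat {l : List (Fin n)} {k : Fin n} (hk : IsSink (signedAnMat n l) k) :
    mutSq (signedAnMat n l) k = signedAnMat n (l ++ [k]) := by
  ext a b
  rw [mutSq_of_isSink (signedAnMat_skew l) hk]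
  simp only [signedAnMat, List.count_append, List.count_singleton, beq_iff_eq]
  by_cases ha : a = k <;> by_cases hb : b = k
  · subst ha hb; simp [AnMat]
  · subst ha; simp [Ne.symm hb, pow_add]
  · subst hb; simp [Ne.symm ha, pow_add]
  · simp [ha, hb, Ne.symm ha, Ne.symm hb]

theorem mutSeqSq_take_eq_signedAnMat {ks : List (Fin n)}
    (hsink : ∀ t (ht : t < ks.length), IsSink (signedAnMat n (ks.take t)) ks[t])
    {t : ℕ} (ht : t ≤ ks.length) :
    mutSeqSq (AnMat n) (ks.take t) = signedAnMat n (ks.take t) := by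
  induction t with
  | zero => simp [mutSeqSq, signedAnMat_nil]
  | succ t ih =>
    rw [List.take_add_one, List.getElem?_eq_getElem ht, Option.toList_some,
      ← mutSq_signedAnMat (hsink t ht), ← ih (Nat.le_of_succ_le ht)]
    simp only [mutSeqSq, List.foldl_append, List.foldl_cons, List.foldl_nil]

end Mutation

/-- `pos v m` is the position in `ks` of the copy of `v` in the `m`-th of the shuffled lists
(all 0-based). -/
structure IsShufflePos (n : ℕ) (ks : List (Fin n)) (pos : ℕ → ℕ → ℕ) : Prop where
  getElem_pos : ∀ v m, v < n → m < n - v → ∃ h : pos v m < ks.length, (ks[pos v m]'h).val = v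
  strictMonoOn : ∀ v < n, StrictMonoOn (pos v) (Set.Iio (n - v))
  pos_lt_pos_succ : ∀ v m, v + 1 < n → m < n - (v + 1) → pos v m < pos (v + 1) m
  pos_succ_lt_pos : ∀ v m, v + 1 < n → m < n - (v + 1) → pos (v + 1) m < pos v (m + 1)
  exists_pos_eq : ∀ t < ks.length, ∃ v m, v < n ∧ m < n - v ∧ pos v m = t

theorem IsShuffleSystem.exists_isShufflePos {n : ℕ} {ks : List (Fin n)}
    (h : IsShuffleSystem (List.finRange n) ks) : ∃ pos, IsShufflePos n ks pos := by
  obtain ⟨pos, hget, hmono, hlt, hlt', hsurj⟩ := h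
  simp only [List.length_finRange, List.get_eq_getElem, List.getElem_finRange]
    at hget hmono hlt hlt' hsurj
  refine ⟨pos, ⟨fun v m hv hm => ?_, fun v hv a ha b hb hab => hmono v a b hv hab hb, hlt, hlt',
    fun t ht => hsurj ⟨t, ht⟩⟩⟩
  obtain ⟨h, he⟩ := hget v m hv hm
  exact ⟨h, by simp [he]⟩

theorem card_filter_range_eq {f : ℕ → ℕ} {N t c : ℕ} (hc : c ≤ N)
    (hf : ∀ m < N, f m < t ↔ m < c) : #{m ∈ range N | f m < t} = c := by
  rw [← card_range c]
  congr 1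
  ext m
  simp only [mem_filter, mem_range]
  exact ⟨fun ⟨hm, hfm⟩ => (hf m hm).1 hfm, fun hm => ⟨hm.trans_le hc, (hf m (hm.trans_le hc)).2 hm⟩⟩

namespace IsShufflePos

variable {n : ℕ} {ks : List (Fin n)} {pos : ℕ → ℕ → ℕ}

theorem card_filter_pos_eq (hp : IsShufflePos n ks pos) (v : Fin n) {t : ℕ} (ht : t < ks.length) :
    #{m ∈ range (n - v) | pos v m = t} = if ks[t] = v then 1 else 0 := by
  split_ifs with hv
  · obtain ⟨w, m, hw, hm, rfl⟩ := hp.exists_pos_eq t ht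
    obtain ⟨_, hkw⟩ := hp.getElem_pos w m hw hm
    obtain rfl : v.val = w := by rw [← hkw, hv]
    refine card_eq_one.2 ⟨m, ?_⟩
    ext m'
    simp only [mem_filter, mem_range, mem_singleton]
    exact ⟨fun ⟨hm', he⟩ => (hp.strictMonoOn v v.isLt).injOn hm' hm he, fun he => ⟨he ▸ hm, he ▸ rfl⟩⟩
  · refine card_eq_zero.2 (filter_eq_empty_iff.2 fun m hm he => hv (Fin.ext ?_))
    obtain ⟨_, hkv⟩ := hp.getElem_pos v m v.isLt (mem_range.1 hm)
    simpa only [he] using hkv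

theorem count_take (hp : IsShufflePos n ks pos) (v : Fin n) {t : ℕ} (ht : t ≤ ks.length) :
    (ks.take t).count v = #{m ∈ range (n - v) | pos v m < t} := by
  induction t with
  | zero => simp
  | succ t ih =>
    have hlt : t < ks.length := ht
    rw [List.take_add_one, List.getElem?_eq_getElem hlt, Option.toList_some, List.count_append,
      List.count_singleton', ih hlt.le, ← hp.card_filter_pos_eq v hlt,
      ← card_union_of_disjoint (disjoint_filter.2 fun _ _ h he => h.ne he), ← filter_or]
    simp only [Nat.lt_add_one_iff_lt_or_eq]

theorem count_take_pos_self (hp : IsShufflePos n ks pos) (v : Fin n) {m : ℕ} (hm : m < n - v) :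
    (ks.take (pos v m)).count v = m := by
  rw [hp.count_take v (hp.getElem_pos v m v.isLt hm).1.le]
  exact card_filter_range_eq hm.le fun m' hm' => (hp.strictMonoOn v v.isLt).lt_iff_lt hm' hm

theorem count_take_pos_of_succ_eq (hp : IsShufflePos n ks pos) {j k : Fin n}
    (hjk : j.val + 1 = k.val) {m : ℕ} (hm : m < n - k) :
    (ks.take (pos k m)).count j = m + 1 := by
  have hk : j.val + 1 < n := hjk ▸ k.isLt
  rw [hp.count_take j (hp.getElem_pos k m k.isLt hm).1.le, ← hjk]
  rw [← hjk] at hm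
  have hmono := (hp.strictMonoOn j j.isLt).monotoneOn
  refine card_filter_range_eq (by omega) fun m' hm' => ⟨fun h => ?_, fun h => ?_⟩
  · by_contra! hle
    have := hp.pos_succ_lt_pos j m hk hm
    have := hmono (show m + 1 < n - j by omega) hm' hle
    omega
  · have := hp.pos_lt_pos_succ j m hk hm
    have := hmono hm' (show m < n - j by omega) (Nat.le_of_lt_succ h)
    omega

theorem count_take_pos_of_eq_succ (hp : IsShufflePos n ks pos) {j k : Fin n}
    (hkj : k.val + 1 = j.val) {m : ℕ} (hm : m < n - k) :
    (ks.take (pos k m)).count j = m := by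
  have hj : k.val + 1 < n := hkj ▸ j.isLt
  rw [hp.count_take j (hp.getElem_pos k m k.isLt hm).1.le, ← hkj]
  have hmono := (hp.strictMonoOn k k.isLt).monotoneOn
  refine card_filter_range_eq (by omega) fun m' hm' => ⟨fun h => ?_, fun h => ?_⟩
  · by_contra! hle
    have := hp.pos_lt_pos_succ k m' hj hm'
    have := hmono hm (show m' < n - k by omega) hle
    omega
  · have := hp.pos_succ_lt_pos k m' hj (by omega)
    have := hmono (show m' + 1 < n - k by omega) hm h
    omega

theorem isSink_signedAnMat_take (hp : IsShufflePos n ks pos) {t : ℕ} (ht : t < ks.length) :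
    IsSink (signedAnMat n (ks.take t)) ks[t] := by
  obtain ⟨v, m, hv, hm, rfl⟩ := hp.exists_pos_eq t ht
  obtain ⟨_, hkv⟩ := hp.getElem_pos v m hv hm
  suffices ∀ k : Fin n, k.val = v → IsSink (signedAnMat n (ks.take (pos v m))) k from this _ hkv
  rintro k rfl
  refine isSink_signedAnMat (fun j hj => ?_) (fun j hj => ?_)
  · rw [hp.count_take_pos_of_succ_eq hj hm, hp.count_take_pos_self k hm]
  · rw [hp.count_take_pos_of_eq_succ hj hm, hp.count_take_pos_self k hm]

end IsShufflePos

/-- Along any allowed shuffle mutation sequence starting from the linearly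
oriented `A_n` quiver, at every step `i` the current quiver is an orientation
of the `A_n` path graph (skew-symmetric matrix with entries of absolute value
`1` exactly between adjacent vertices) and the mutation vertex `k_i` is a sink. -/
theorem an_shuffle_orientation_sink (n : ℕ) (ks : List (Fin n))
    (h : IsShuffleSystem (List.finRange n) ks) (i : Fin ks.length) :
    (∀ a b : Fin n,
      mutSeqSq (AnMat n) (ks.take i.val) a b = -mutSeqSq (AnMat n) (ks.take i.val) b a) ∧
    (∀ a b : Fin n,
      (mutSeqSq (AnMat n) (ks.take i.val) a b).natAbs =
        if a.val = b.val + 1 ∨ b.val = a.val + 1 then 1 else 0) ∧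
    (∀ j : Fin n, mutSeqSq (AnMat n) (ks.take i.val) (ks.get i) j ≤ 0) := by
  obtain ⟨pos, hp⟩ := h.exists_isShufflePos
  rw [mutSeqSq_take_eq_signedAnMat (fun t ht => hp.isSink_signedAnMat_take ht) i.isLt.le]
  exact ⟨signedAnMat_skew _, natAbs_signedAnMat _, hp.isSink_signedAnMat_take i.isLt⟩
end

section
/- In a layered valued quiver mutation sequence (layered T-system), if at step i the mutation vertex k_i has incoming simple arrows only from its same-layer neighbors k_i[-1] and k_i[1], outgoing arrows only to vertices of other layers, and outgoing simple arrows to certain frozen vertices in the same layer, then performing the mutation μ_{k_i} does not change any arrows between vertices of layers other than η(k_i) and any frozen vertices, nor any arrows among mutable vertices outside layer η(k_i). -/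
/-- `j` is the immediate predecessor `k[-1]` of `k` inside the level set
`η⁻¹(η k)`. -/
def isPredIn {n : ℕ} (η : Fin n → ℤ) (j k : Fin n) : Prop :=
  j < k ∧ η j = η k ∧ ∀ l : Fin n, j < l → l < k → η l ≠ η k

/-- `j` is the immediate successor `k[1]` of `k` inside the level set
`η⁻¹(η k)`. -/
def isSuccIn {n : ℕ} (η : Fin n → ℤ) (j k : Fin n) : Prop :=
  k < j ∧ η j = η k ∧ ∀ l : Fin n, k < l → l < j → η l ≠ η k

/-- One mutation step of a layered valued ice quiver (with frozen vertices the
copies `j'` of the mutable vertices, layered by the same function `η`): if the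
mutation vertex `k` has incoming simple arrows only from its same-layer
neighbours `k[-1]` and `k[1]`, outgoing arrows among mutable vertices only to
other layers, and its arrows to frozen vertices are outgoing simple arrows to
frozen vertices of the same layer, then `μ_k` changes neither the arrows
between mutable vertices of layers other than `η k` and frozen vertices, nor
the arrows among mutable vertices outside the layer `η k`. -/
theorem layered_mutation_locality (n : ℕ) (η : Fin n → ℤ)
    (B : (Fin n ⊕ Fin n) → Fin n → ℤ) (k : Fin n)
    (hskew : ∃ d : Fin n → ℤ, (∀ a, 0 < d a) ∧
      ∀ a b : Fin n, d a * B (Sum.inl a) b = -(d b * B (Sum.inl b) a))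
    (hin : ∀ j : Fin n, 0 < B (Sum.inl j) k →
      (isPredIn η j k ∨ isSuccIn η j k) ∧ B (Sum.inl j) k = 1 ∧ B (Sum.inl k) j = -1)
    (hout : ∀ j : Fin n, 0 < B (Sum.inl k) j → η j ≠ η k)
    (hfr : ∀ j : Fin n, B (Sum.inr j) k ≠ 0 → η j = η k ∧ B (Sum.inr j) k = -1) :
    (∀ i j : Fin n, η i ≠ η k → η j ≠ η k →
      mutExt B k (Sum.inl i) j = B (Sum.inl i) j) ∧
    (∀ j i : Fin n, η i ≠ η k →
      mutExt B k (Sum.inr j) i = B (Sum.inr j) i) := by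
  obtain ⟨d, hd, hs⟩ := hskew
  have hb : ∀ j : Fin n, η j ≠ η k → 0 ≤ B (Sum.inl k) j := by
    intro j hj
    by_contra h
    push_neg at h
    have h2 : 0 < B (Sum.inl j) k := by
      have := hs k j
      nlinarith [hd k, hd j]
    exact hj (((hin j h2).1).elim (fun h => h.2.1) (fun h => h.2.1))
  have ha : ∀ i : Fin n, η i ≠ η k → B (Sum.inl i) k ≤ 0 := by
    intro i hi
    by_contra h
    push_neg at h
    exact hi (((hin i h).1).elim (fun h => h.2.1) (fun h => h.2.1))
  constructor
  · intro i j hi hj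
    have hjk : j ≠ k := fun h => hj (h ▸ rfl)
    have hik : Sum.inl i ≠ (Sum.inl k : Fin n ⊕ Fin n) := by
      intro h
      exact hi (by cases h; rfl)
    unfold mutExt
    rw [if_neg (by tauto)]
    have hz : |B (Sum.inl i) k| * B (Sum.inl k) j
        + B (Sum.inl i) k * |B (Sum.inl k) j| = 0 := by
      rw [abs_of_nonpos (ha i hi), abs_of_nonneg (hb j hj)]; ring
    rw [hz]
    simp
  · intro j i hi
    have hik : i ≠ k := fun h => hi (h ▸ rfl)
    unfold mutExt
    rw [if_neg (by simp [hik])]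
    have hjn : B (Sum.inr j) k ≤ 0 := by
      by_cases h : B (Sum.inr j) k = 0
      · simp [h]
      · linarith [(hfr j h).2]
    have hz : |B (Sum.inr j) k| * B (Sum.inl k) i
        + B (Sum.inr j) k * |B (Sum.inl k) i| = 0 := by
      rw [abs_of_nonpos hjn, abs_of_nonneg (hb i hi)]; ring
    rw [hz]
    simp
end

section
/- In a contiguous path ν from id to w₀ in S_N, for each fixed integer k the steps that move k to the right past elements j with η(j) = η(k) occur in the order of increasing j; consequently the induced mutation sequence seq(ν) restricted to the layer η^{-1}(η(k)) = {j_1 < j_2 < ... < j_l} contains, for each k, a consecutive (within its own contribution) list j_1, j_2, ..., j_{O_+(k)}, where O_+(k) is the number of elements of the layer strictly greater than k. -/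
/-- The value `τ_•(x)` of the reordering permutation `τ_•` attached to a layer
function `η` and a permutation `τ`: the `r`-th smallest element of the level
set `η⁻¹(η x)`, where `r` is the rank of the position `τ⁻¹(x)` among the
positions `τ⁻¹(y)` of the elements `y` of the level set. -/
def taudot {N : ℕ} (η : Fin N → ℤ) (τ : Equiv.Perm (Fin N)) (x : Fin N) : Fin N :=
  ((Finset.univ.filter (fun y => η y = η x)).sort (· ≤ ·)).getD
    ((Finset.univ.filter (fun y => η y = η x ∧ τ.symm y < τ.symm x)).card) x

/-!
A step of a contiguous path swaps an adjacent pair `m < n` standing in increasing order, so it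
creates exactly one inversion, `(m, n)`, and undoes none. Hence whenever `a < b` stand in the
wrong order, some earlier step swapped exactly `a` and `b`, and by the rule every `k < a` was
already to the right of `a` at that moment. So once `k` has passed `b`, it has passed every `a`
with `k < a < b`, which forces the values passed by `k` to increase along the path.

When `k` passes `n`, the entries left of `n` after the step are those left of `k` before it;
by the rule these are exactly the values `k` has already passed. Counting those in the layer of
`n` shows that the rank of `n` in its layer is the number of earlier passes of `k` inside it.
-/

open Finset

namespace Fin

variable {N : ℕ} {p q : Fin N}

theorem swap_lt_swap_of_adjacent (hpq : (q : ℕ) = p + 1) {x y : Fin N} (hxy : x < y)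
    (h : ¬(x = p ∧ y = q)) : Equiv.swap p q x < Equiv.swap p q y := by
  simp only [Equiv.swap_apply_def]
  rw [not_and_or] at h
  split_ifs <;> simp only [Fin.lt_def, Fin.ext_iff] at * <;> omega

theorem swap_lt_left_iff_of_adjacent (hpq : (q : ℕ) = p + 1) (x : Fin N) :
    Equiv.swap p q x < p ↔ x < p := by
  simp only [Equiv.swap_apply_def]
  split_ifs <;> simp only [Fin.lt_def, Fin.ext_iff] at * <;> omega

end Fin

theorem taudot_eq_getD {N : ℕ} (η : Fin N → ℤ) (τ : Equiv.Perm (Fin N)) (x d : Fin N) :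
    taudot η τ x = ((univ.filter fun y => η y = η x).sort (· ≤ ·)).getD
      (univ.filter fun y => η y = η x ∧ τ.symm y < τ.symm x).card d := by
  have hlt : (univ.filter fun y => η y = η x ∧ τ.symm y < τ.symm x).card <
      ((univ.filter fun y => η y = η x).sort (· ≤ ·)).length := by
    rw [length_sort]
    refine card_lt_card ⟨fun y hy => ?_, fun hsub => ?_⟩
    · exact mem_filter.2 ⟨mem_univ y, (mem_filter.1 hy).2.1⟩
    · exact lt_irrefl _ (mem_filter.1 (hsub (mem_filter.2 ⟨mem_univ x, rfl⟩))).2.2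
  rw [taudot, List.getD_eq_getElem _ _ hlt, List.getD_eq_getElem _ _ hlt]

namespace ContigPath

variable {N : ℕ} (P : ContigPath N)

def nextPos (i : Fin P.M) : Fin N := ⟨(P.pos i).val + 1, P.hpos i⟩

def moved (i : Fin P.M) : Fin N := P.ν i.castSucc (P.pos i)

def passed (i : Fin P.M) : Fin N := P.ν i.castSucc (P.nextPos i)

def Before (t : Fin (P.M + 1)) (x y : Fin N) : Prop := (P.ν t).symm x < (P.ν t).symm y

instance (t : Fin (P.M + 1)) (x y : Fin N) : Decidable (P.Before t x y) :=
  inferInstanceAs (Decidable (_ < _))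

variable {P} {i i' : Fin P.M} {t t' : Fin (P.M + 1)} {a b k x y : Fin N}

theorem moved_lt_passed (i : Fin P.M) : P.moved i < P.passed i := P.incr i

theorem symm_ν_succ (i : Fin P.M) (x : Fin N) :
    (P.ν i.succ).symm x = Equiv.swap (P.pos i) (P.nextPos i) ((P.ν i.castSucc).symm x) := by
  rw [P.step i]
  rfl

theorem ν_succ_pos (i : Fin P.M) : P.ν i.succ (P.pos i) = P.passed i := by
  rw [P.step i, Equiv.Perm.mul_apply, Equiv.swap_apply_left]
  rfl

theorem symm_moved (i : Fin P.M) : (P.ν i.castSucc).symm (P.moved i) = P.pos i :=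
  Equiv.symm_apply_apply _ _

theorem symm_passed (i : Fin P.M) : (P.ν i.castSucc).symm (P.passed i) = P.nextPos i :=
  Equiv.symm_apply_apply _ _

theorem pos_lt_nextPos (i : Fin P.M) : P.pos i < P.nextPos i :=
  Fin.lt_def.2 (Nat.lt_succ_self _)

theorem before_of_not_before (hne : x ≠ y) (h : ¬P.Before t y x) : P.Before t x y :=
  lt_of_le_of_ne (not_lt.1 h) ((P.ν t).symm.injective.ne hne)

theorem before_moved_passed (i : Fin P.M) : P.Before i.castSucc (P.moved i) (P.passed i) := by
  rw [Before, symm_moved, symm_passed]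
  exact pos_lt_nextPos i

theorem before_passed_moved_succ (i : Fin P.M) : P.Before i.succ (P.passed i) (P.moved i) := by
  rw [Before, symm_ν_succ, symm_ν_succ, symm_moved, symm_passed, Equiv.swap_apply_left,
    Equiv.swap_apply_right]
  exact pos_lt_nextPos i

theorem before_passed_succ_iff (i : Fin P.M) (y : Fin N) :
    P.Before i.succ y (P.passed i) ↔ P.Before i.castSucc y (P.moved i) := by
  rw [Before, Before, symm_ν_succ, symm_ν_succ, symm_passed, symm_moved,
    Equiv.swap_apply_right]
  exact Fin.swap_lt_left_iff_of_adjacent rfl _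

theorem before_moved_of_lt (hy : y < P.moved i) : P.Before i.castSucc (P.moved i) y := by
  rw [Before, symm_moved]
  exact P.rule i y hy

theorem moved_lt_of_before (h : P.Before i.castSucc y (P.moved i)) : P.moved i < y := by
  refine lt_of_not_ge fun hy => ?_
  rcases hy.eq_or_lt with rfl | hlt
  · exact lt_irrefl _ h
  · exact lt_asymm h (before_moved_of_lt hlt)

theorem before_succ_of_before (hab : a < b) (h : P.Before i.castSucc b a) :
    P.Before i.succ b a := by
  rw [Before, symm_ν_succ, symm_ν_succ]
  refine Fin.swap_lt_swap_of_adjacent rfl h fun ⟨hb, ha⟩ => lt_asymm hab ?_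
  rw [(Equiv.symm_apply_eq _).1 hb, (Equiv.symm_apply_eq _).1 ha]
  exact moved_lt_passed i

theorem moved_passed_eq_of_before_succ (hab : a < b) (h : ¬P.Before i.castSucc b a)
    (h' : P.Before i.succ b a) : P.moved i = a ∧ P.passed i = b := by
  by_contra hne
  refine lt_asymm h' ?_
  rw [symm_ν_succ, symm_ν_succ]
  refine Fin.swap_lt_swap_of_adjacent rfl (before_of_not_before hab.ne h) fun ⟨ha, hb⟩ => hne ?_
  rw [moved, passed, ← ha, ← hb, Equiv.apply_symm_apply, Equiv.apply_symm_apply]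
  exact ⟨rfl, rfl⟩

theorem before_mono (hab : a < b) (htt : t ≤ t') (h : P.Before t b a) : P.Before t' b a := by
  induction t' using Fin.induction with
  | zero => rwa [Fin.le_zero_iff.1 htt] at h
  | succ i ih =>
    rcases htt.eq_or_lt with rfl | hlt
    · exact h
    · exact before_succ_of_before hab (ih (Fin.le_castSucc_iff.2 hlt))

theorem exists_step_of_before (hab : a < b) (h : P.Before t b a) :
    ∃ s : Fin P.M, s.castSucc < t ∧ P.moved s = a ∧ P.passed s = b := by
  induction t using Fin.induction with
  | zero =>
    unfold Before at h
    rw [P.start] at h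
    exact absurd hab (lt_asymm h)
  | succ i ih =>
    by_cases h₀ : P.Before i.castSucc b a
    · obtain ⟨s, hs, hsab⟩ := ih h₀
      exact ⟨s, hs.trans Fin.castSucc_lt_succ, hsab⟩
    · exact ⟨i, Fin.castSucc_lt_succ, moved_passed_eq_of_before_succ hab h₀ h⟩

theorem before_of_inverted (hka : k < a) (hab : a < b) (h : P.Before t b a) :
    P.Before t a k := by
  obtain ⟨s, hs, rfl, rfl⟩ := exists_step_of_before hab h
  exact before_mono hka hs.le (before_moved_of_lt hka)

theorem before_of_between (hka : k < a) (hab : a < b) (h : P.Before t b k) :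
    P.Before t a k := by
  by_contra hak
  exact hak (before_of_inverted hka hab (lt_trans h (before_of_not_before hka.ne hak)))

theorem passed_lt_passed (hii : i < i') (hk : P.moved i = P.moved i') :
    P.passed i < P.passed i' := by
  have hpassed : P.Before i'.castSucc (P.passed i) (P.moved i') := hk ▸
    before_mono (moved_lt_passed i) (Fin.castSucc_lt_iff_succ_le.1
      (Fin.castSucc_lt_castSucc_iff.2 hii)) (before_passed_moved_succ i)
  have hnot := lt_asymm (before_moved_passed i')
  rcases lt_trichotomy (P.passed i) (P.passed i') with hlt | heq | hgt
  · exact hlt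
  · exact absurd (heq ▸ hpassed) hnot
  · exact absurd (before_of_between (moved_lt_passed i') hgt hpassed) hnot

theorem card_steps_eq_card_passed (t : Fin (P.M + 1)) (k : Fin N) (p : Fin N → Prop)
    [DecidablePred p] :
    (univ.filter fun s : Fin P.M => s.castSucc < t ∧ P.moved s = k ∧ p (P.passed s)).card =
      (univ.filter fun y => p y ∧ k < y ∧ P.Before t y k).card := by
  refine card_bij (fun s _ => P.passed s) (fun s hs => ?_) (fun s₁ hs₁ s₂ hs₂ heq => ?_)
    (fun y hy => ?_)
  · obtain ⟨-, hst, rfl, hp⟩ := mem_filter.1 hs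
    exact mem_filter.2 ⟨mem_univ _, hp, moved_lt_passed s, before_mono (moved_lt_passed s)
      (Fin.castSucc_lt_iff_succ_le.1 hst) (before_passed_moved_succ s)⟩
  · obtain ⟨-, -, hk₁, -⟩ := mem_filter.1 hs₁
    obtain ⟨-, -, hk₂, -⟩ := mem_filter.1 hs₂
    by_contra hne
    rcases lt_or_gt_of_ne hne with h | h
    · exact (passed_lt_passed h (hk₁.trans hk₂.symm)).ne heq
    · exact (passed_lt_passed h (hk₂.trans hk₁.symm)).ne' heq
  · obtain ⟨-, hp, hky, hbefore⟩ := mem_filter.1 hy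
    obtain ⟨s, hst, hs, rfl⟩ := exists_step_of_before hky hbefore
    exact ⟨s, mem_filter.2 ⟨mem_univ _, hst, hs, hp⟩, rfl⟩

theorem taudot_ν_succ_pos (η : Fin N → ℤ) (i : Fin P.M)
    (hη : η (P.passed i) = η (P.moved i)) :
    taudot η (P.ν i.succ) (P.ν i.succ (P.pos i)) =
      ((univ.filter fun j => η j = η (P.moved i)).sort (· ≤ ·)).getD
        (univ.filter fun i' => i' < i ∧ P.moved i' = P.moved i ∧
          η (P.passed i') = η (P.moved i)).card (P.moved i) := by
  rw [ν_succ_pos, taudot_eq_getD η _ _ (P.moved i), hη]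
  congr 1
  calc (univ.filter fun y => η y = η (P.moved i) ∧ P.Before i.succ y (P.passed i)).card
      = (univ.filter fun y => η y = η (P.moved i) ∧ P.moved i < y ∧
          P.Before i.castSucc y (P.moved i)).card := by
        refine congrArg card (filter_congr fun y _ => and_congr_right fun _ => ?_)
        rw [before_passed_succ_iff]
        exact ⟨fun h => ⟨moved_lt_of_before h, h⟩, And.right⟩
    _ = _ := by
        rw [← card_steps_eq_card_passed]
        simp only [Fin.castSucc_lt_castSucc_iff]

end ContigPath

/-- In a contiguous path, for each fixed value `k`: (1) the steps moving `k`
to the right past a same-layer value occur in increasing order of the passed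
value; (2) if step `i` moves `k` past a same-layer value and `c` of the
earlier steps did so as well, then the recorded mutation index
`(ν_{i+1})_• ν_{i+1}(p_i)` is the `(c+1)`-st smallest element `j_{c+1}` of the
layer `η⁻¹(η k) = {j_1 < j_2 < ...}`; hence the contribution of `k` to the
induced mutation sequence `seq(ν)` within its layer is the list
`j_1, j_2, ..., j_{O_+(k)}`. -/
theorem contigPath_layer_passes (N : ℕ) (η : Fin N → ℤ) (P : ContigPath N)
    (k : Fin N) :
    (∀ i i' : Fin P.M, i < i' →
      P.ν i.castSucc (P.pos i) = k → P.ν i'.castSucc (P.pos i') = k →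
      η (P.ν i.castSucc ⟨(P.pos i).val + 1, P.hpos i⟩) = η k →
      η (P.ν i'.castSucc ⟨(P.pos i').val + 1, P.hpos i'⟩) = η k →
      P.ν i.castSucc ⟨(P.pos i).val + 1, P.hpos i⟩ <
        P.ν i'.castSucc ⟨(P.pos i').val + 1, P.hpos i'⟩) ∧
    (∀ i : Fin P.M, P.ν i.castSucc (P.pos i) = k →
      η (P.ν i.castSucc ⟨(P.pos i).val + 1, P.hpos i⟩) = η k →
      taudot η (P.ν i.succ) (P.ν i.succ (P.pos i)) =
        ((Finset.univ.filter (fun j => η j = η k)).sort (· ≤ ·)).getD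
          ((Finset.univ.filter (fun i' : Fin P.M => i' < i ∧
              P.ν i'.castSucc (P.pos i') = k ∧
              η (P.ν i'.castSucc ⟨(P.pos i').val + 1, P.hpos i'⟩) = η k)).card)
          k) := by
  refine ⟨fun i i' hii hk hk' _ _ => ContigPath.passed_lt_passed hii (hk.trans hk'.symm),
    fun i hk hη => ?_⟩
  subst hk
  exact ContigPath.taudot_ν_succ_pos η i hη
end
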